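/- Let u > 1 be an integer and l an odd prime, s ≥ 1. Then (u^s + 1)^{l-2} · (u^s - 1)^l divides (u^{ls} + 1)^{2l-3} · (u^{ls} - 1)^{2l-1}. -/
import Mathlib

theorem stmt_13 (u l s : ℕ) (hu : 1 < u) (hl : l.Prime) (hlodd : Odd l) (hs : 1 ≤ s) :
    (u ^ s + 1) ^ (l - 2) * (u ^ s - 1) ^ l ∣
      (u ^ (l * s) + 1) ^ (2 * l - 3) * (u ^ (l * s) - 1) ^ (2 * l - 1) := by
  have hl3 : 3 ≤ l := by
    have h2 := hl.two_le
    rcases hlodd with ⟨k, hk⟩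
    omega
  have h1 : u ^ s + 1 ∣ u ^ (l * s) + 1 := by
    have := Odd.nat_add_dvd_pow_add_pow (u ^ s) 1 hlodd
    simpa [← pow_mul, mul_comm s l] using this
  have h2 : u ^ s - 1 ∣ u ^ (l * s) - 1 := by
    have := Nat.sub_dvd_pow_sub_pow (u ^ s) 1 l
    simpa [← pow_mul, mul_comm s l] using this
  exact mul_dvd_mul
    ((pow_dvd_pow_of_dvd h1 _).trans (pow_dvd_pow _ (by omega)))
    ((pow_dvd_pow_of_dvd h2 _).trans (pow_dvd_pow _ (by omega)))
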